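/- arXiv:1411.7890 — 2 statements merged into one kernel-verified Lean document; each statement's English description precedes it below -/
import Mathlib

section
/- The ideal L(I) has linear quotients with respect to any total order ≤ on G(L(I)) extending the componentwise partial order; that is, for every u ∈ G(L(I)), the colon ideal ({v ∈ G(L(I)) : v < u}) : (u) is generated by a subset of the variables of S^℘. -/
/-!
Write `u_a` for the generator of `L(I)` indexed by `a`. If `a'` precedes `a`, then `a ≤ a'`
would force `a' = a`, so `a'_i < a_i` for some `i`. The variable `x = x_{i,a'_i+1}` divides
`u_{a'}` but not `u_a`, and `x · u_a = x_{i,a_i+1} · u_{a''}`, where `a''` is `a` with its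
`i`-th entry lowered to `a'_i`; as `a'' ≤ a` componentwise, `u_{a''}` precedes `u_a`. So every
generator `u_{a'} / gcd(u_{a'}, u_a)` of the monomial colon ideal is a multiple of a variable
lying in the colon ideal.
-/

open MvPolynomial

noncomputable section

/-- The vertex set / variable set `𝒮` of the polarized ring `S^℘`: pairs `⟨i, j⟩` with
`1 ≤ i ≤ n`, `1 ≤ j ≤ b i`.  Here `j : Fin (b i)` encodes the paper's second index `j + 1`,
so the vertex `⟨i, j⟩` stands for the variable `x_{i, j+1}` of the paper. -/
abbrev PolVars (m : ℕ) (b : Fin m → ℕ) := Σ i : Fin m, Fin (b i)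

/-- `I` is a monomial ideal, i.e. generated by monomials. -/
def IsMonomialIdeal {K : Type} [Field K] {m : ℕ} (I : Ideal (MvPolynomial (Fin m) K)) : Prop :=
  ∃ A : Set (Fin m →₀ ℕ), I = Ideal.span ((fun c => (monomial c (1 : K))) '' A)

/-- The exponent vectors of the minimal monomial generators of a monomial ideal:
the exponent vectors of monomials of `I` that are minimal under divisibility. -/
def MinGens (K : Type) [Field K] {m : ℕ} (I : Ideal (MvPolynomial (Fin m) K)) :
    Set (Fin m →₀ ℕ) :=
  {c | (monomial c (1 : K)) ∈ I ∧ ∀ c' : Fin m →₀ ℕ, c' ≤ c → c' ≠ c →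
      (monomial c' (1 : K)) ∉ I}

/-- The polarization `v^℘ = ∏_{i=1}^n ∏_{j=1}^{c_i} x_{i,j}` of the monomial `v = x^c`. -/
def polMon (K : Type) [Field K] {m : ℕ} (b : Fin m → ℕ) (c : Fin m →₀ ℕ) :
    MvPolynomial (PolVars m b) K :=
  ∏ v ∈ Finset.univ.filter (fun v : PolVars m b => (v.2 : ℕ) < c v.1), X v

/-- The polarization `I^℘ ⊆ S^℘` of the monomial ideal `I`, generated by the
polarizations of the minimal monomial generators of `I`. -/
def polarIdeal (K : Type) [Field K] {m : ℕ} (b : Fin m → ℕ)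
    (I : Ideal (MvPolynomial (Fin m) K)) : Ideal (MvPolynomial (PolVars m b) K) :=
  Ideal.span (polMon K b '' MinGens K I)

/-- The squarefree monomial `x_{1,a_1+1} ⋯ x_{n,a_n+1} ∈ S^℘` associated with the
exponent vector `a` of a monomial `x^a ∈ Mon(S∖I)`. -/
def genL (K : Type) [Field K] {m : ℕ} (b : Fin m → ℕ) (a : Fin m →₀ ℕ) :
    MvPolynomial (PolVars m b) K :=
  ∏ v ∈ Finset.univ.filter (fun v : PolVars m b => (v.2 : ℕ) = a v.1), X v

/-- The ideal `L(I) ⊆ S^℘`, generated by the monomials `x_{1,a_1+1} ⋯ x_{n,a_n+1}`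
with `x^a ∈ Mon(S∖I)`. -/
def LIdeal (K : Type) [Field K] {m : ℕ} (b : Fin m → ℕ)
    (I : Ideal (MvPolynomial (Fin m) K)) : Ideal (MvPolynomial (PolVars m b) K) :=
  Ideal.span (genL K b '' {a | (monomial a (1 : K)) ∉ I})

/-- The monomial prime ideal `φ(x^a) = (x_{1,a_1+1}, …, x_{n,a_n+1}) ⊆ S^℘`. -/
def phiIdeal (K : Type) [Field K] {m : ℕ} (b : Fin m → ℕ) (a : Fin m →₀ ℕ) :
    Ideal (MvPolynomial (PolVars m b) K) :=
  Ideal.span ((fun v => (X v : MvPolynomial (PolVars m b) K)) ''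
    {v : PolVars m b | (v.2 : ℕ) = a v.1})

/-- The set of faces of the simplicial complex `Δ(I)` on the vertex set `𝒮`, whose
Stanley–Reisner ideal is `I^℘`: a finite set `F` of vertices is a face iff the
squarefree monomial `∏_{v ∈ F} v` does not belong to `I^℘`. -/
def facesDelta (K : Type) [Field K] {m : ℕ} (b : Fin m → ℕ)
    (I : Ideal (MvPolynomial (Fin m) K)) : Set (Finset (PolVars m b)) :=
  {F | (∏ v ∈ F, (X v : MvPolynomial (PolVars m b) K)) ∉ polarIdeal K b I}

/-- `F` is a facet (maximal face) of the simplicial complex (set of faces) `Δ`. -/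
def IsFacetOf {V : Type} (Δ : Set (Finset V)) (F : Finset V) : Prop :=
  F ∈ Δ ∧ ∀ G ∈ Δ, F ⊆ G → F = G

/-- Zero-dimensionality data for a monomial ideal: `I` is a proper monomial ideal and,
for each `i`, `b i ≥ 1` is the smallest positive integer with `x_i^{b i} ∈ I`
(equivalently, `dim S/I = 0` with the `b i` minimal). -/
def ZeroDimData (K : Type) [Field K] {m : ℕ} (b : Fin m → ℕ)
    (I : Ideal (MvPolynomial (Fin m) K)) : Prop :=
  IsMonomialIdeal I ∧ I ≠ ⊤ ∧ ∀ i : Fin m, 1 ≤ b i ∧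
    (monomial (Finsupp.single i (b i)) (1 : K)) ∈ I ∧
    ∀ j : ℕ, j < b i → (monomial (Finsupp.single i j) (1 : K)) ∉ I

/-- The deletion `del_Δ(v) = {G ∈ Δ : v ∉ G}`. -/
def delC {V : Type} (Δ : Set (Finset V)) (v : V) : Set (Finset V) :=
  {G ∈ Δ | v ∉ G}

/-- The link `link_Δ(v) = {G ∈ Δ : v ∉ G and G ∪ {v} ∈ Δ}`. -/
def linkC {V : Type} [DecidableEq V] (Δ : Set (Finset V)) (v : V) : Set (Finset V) :=
  {G ∈ Δ | v ∉ G ∧ insert v G ∈ Δ}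

/-- Vertex decomposability of a simplicial complex (given as its set of faces):
`Δ` is vertex decomposable if it is a simplex, or it contains a vertex `v` such that
(i) every facet of `del_Δ(v)` is a facet of `Δ` (`v` is a shedding vertex), and
(ii) both `del_Δ(v)` and `link_Δ(v)` are vertex decomposable. -/
inductive IsVertexDecomposable {V : Type} [DecidableEq V] : Set (Finset V) → Prop
  | simplex (F : Finset V) : IsVertexDecomposable {G | G ⊆ F}
  | shed (Δ : Set (Finset V)) (v : V) (hv : {v} ∈ Δ)
      (hshed : ∀ F : Finset V, IsFacetOf (delC Δ v) F → IsFacetOf Δ F)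
      (hdel : IsVertexDecomposable (delC Δ v))
      (hlink : IsVertexDecomposable (linkC Δ v)) : IsVertexDecomposable Δ

/-- The vertex map replacing `x_{i₀,j}` by `x_{i₀,j-1}` and fixing all other vertices. -/
def shiftDown {m : ℕ} {b : Fin m → ℕ} (i₀ : Fin m) (v : PolVars m b) : PolVars m b :=
  ⟨v.1, ⟨(v.2 : ℕ) - (if v.1 = i₀ then 1 else 0),
    Nat.lt_of_le_of_lt (Nat.sub_le _ _) v.2.isLt⟩⟩

/-- `set(u)` for a generator `u = genL a` of `L(I)` with respect to the order `r`:
the set of variables `x` of `S^℘` such that `x·u` lies in the ideal generated by the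
generators of `L(I)` preceding `u`. -/
def setOfGen (K : Type) [Field K] {m : ℕ} (b : Fin m → ℕ)
    (I : Ideal (MvPolynomial (Fin m) K))
    (r : (Fin m →₀ ℕ) → (Fin m →₀ ℕ) → Prop) (a : Fin m →₀ ℕ) : Set (PolVars m b) :=
  {v | ∃ a' : Fin m →₀ ℕ, (monomial a' (1 : K)) ∉ I ∧ r a' a ∧ a' ≠ a ∧
      genL K b a' ∣ X v * genL K b a}

/-- `J(u,i)`: the weakly increasing sequence of the second indices of the variables
`x_{i,·}` dividing the monomial with exponent vector `e` (counted with multiplicity). -/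
def rowList {m : ℕ} {b : Fin m → ℕ} (e : PolVars m b →₀ ℕ) (i : Fin m) : List ℕ :=
  Multiset.sort (∑ j : Fin (b i), Multiset.replicate (e ⟨i, j⟩) (j : ℕ)) (· ≤ ·)

/-- Lexicographic (weak) order on sequences of natural numbers. -/
def lexLE (l l' : List ℕ) : Prop := l = l' ∨ List.Lex (· < ·) l l'

/-- The exponent vectors of the (minimal) monomial generators of `L(I)^k`:
products of `k` generators of `L(I)`. -/
def GLkE (K : Type) [Field K] {m : ℕ} (b : Fin m → ℕ)
    (I : Ideal (MvPolynomial (Fin m) K)) (k : ℕ) : Set (PolVars m b →₀ ℕ) :=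
  {e | ∃ f : Fin k → (Fin m →₀ ℕ), (∀ j, (monomial (f j) (1 : K)) ∉ I) ∧
      (monomial e (1 : K) : MvPolynomial (PolVars m b) K) = ∏ j, genL K b (f j)}

/-- The depth of a module `M` with respect to the ideal `J`: the maximal length of an
`M`-regular sequence consisting of elements of `J`. -/
def myDepth (R : Type) [CommRing R] (J : Ideal R) (M : Type) [AddCommGroup M]
    [Module R M] : ℕ :=
  sSup {k : ℕ | ∃ rs : List R, rs.length = k ∧ (∀ r ∈ rs, r ∈ J) ∧
      RingTheory.Sequence.IsRegular M rs}

/-- `max{deg lcm(u_1, …, u_k) : u_1, …, u_k ∈ Mon(S∖I)}`; the degree of the lcm of the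
monomials `x^{f 1}, …, x^{f k}` is `∑_i max_j (f j) i`. -/
def maxLcmDeg (K : Type) [Field K] {m : ℕ} (I : Ideal (MvPolynomial (Fin m) K))
    (k : ℕ) : ℕ :=
  sSup {d : ℕ | ∃ f : Fin k → (Fin m →₀ ℕ), (∀ j, (monomial (f j) (1 : K)) ∉ I) ∧
      d = ∑ i : Fin m, Finset.univ.sup (fun j => (f j) i)}


namespace MvPolynomial

variable {σ R : Type*} [CommSemiring R]

theorem colon_span_monomial_eq_span_X {S : Set (σ →₀ ℕ)} {e : σ →₀ ℕ}
    (h : ∀ s ∈ S, ∃ v, e v < s v ∧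
      X v * monomial e 1 ∈ Ideal.span ((fun s => monomial s (1 : R)) '' S)) :
    (Ideal.span ((fun s => monomial s (1 : R)) '' S)).colon (Ideal.span {monomial e (1 : R)}) =
      Ideal.span (X '' {v | X v * monomial e 1 ∈
        Ideal.span ((fun s => monomial s (1 : R)) '' S)}) := by
  refine le_antisymm (fun f hf => ?_) ?_
  · rw [Ideal.mem_colon_span_singleton, mem_ideal_span_monomial_image] at hf
    rw [mem_ideal_span_X_image]
    intro c hc
    obtain ⟨s, hs, hsc⟩ := hf (c + e) <| by
      rwa [mem_support_iff, coeff_mul_monomial, mul_one, ← mem_support_iff]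
    obtain ⟨v, hev, hv⟩ := h s hs
    have := hsc v
    exact ⟨v, hv, by rw [Finsupp.add_apply] at this; omega⟩
  · rw [Ideal.span_le]
    rintro _ ⟨v, hv, rfl⟩
    exact Ideal.mem_colon_span_singleton.mpr hv

end MvPolynomial

section

variable {K : Type} [Field K] {m : ℕ} {b : Fin m → ℕ}

def genLExp (b : Fin m → ℕ) (a : Fin m →₀ ℕ) : PolVars m b →₀ ℕ :=
  ∑ v ∈ Finset.univ.filter (fun v : PolVars m b => (v.2 : ℕ) = a v.1), Finsupp.single v 1

lemma genLExp_apply (a : Fin m →₀ ℕ) (v : PolVars m b) :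
    genLExp b a v = if (v.2 : ℕ) = a v.1 then 1 else 0 := by
  simp [genLExp, Finsupp.finsetSum_apply, Finsupp.single_apply]

lemma genL_eq_monomial (a : Fin m →₀ ℕ) : genL K b a = monomial (genLExp b a) 1 := by
  rw [genL, genLExp, monomial_sum_one]
  rfl

lemma X_mul_genL_eq_X_mul_genL_update (a : Fin m →₀ ℕ) (i : Fin m) (j : Fin (b i))
    (hai : a i < b i) :
    X ⟨i, j⟩ * genL K b a = X ⟨i, ⟨a i, hai⟩⟩ * genL K b (a.update i j) := by
  simp only [genL_eq_monomial, X, monomial_mul, one_mul]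
  refine congrArg (monomial · 1) (Finsupp.ext fun ⟨i', j'⟩ => ?_)
  rcases eq_or_ne i i' with rfl | hi
  · simp [Finsupp.single_apply, genLExp_apply, Fin.ext_iff]
    split_ifs <;> omega
  · simp [genLExp_apply, Ne.symm hi]

lemma X_mul_genL_mem_span_genL {E : Set (Fin m →₀ ℕ)} {a : Fin m →₀ ℕ} {i : Fin m}
    (j : Fin (b i)) (hai : a i < b i) (hE : a.update i j ∈ E) :
    X ⟨i, j⟩ * genL K b a ∈ Ideal.span (genL K b '' E) := by
  rw [X_mul_genL_eq_X_mul_genL_update a i j hai]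
  exact Ideal.mul_mem_left _ _ (Ideal.subset_span ⟨_, hE, rfl⟩)

end

section

variable {K : Type} [Field K] {m : ℕ} {I : Ideal (MvPolynomial (Fin m) K)}

lemma monomial_notMem_of_le {a a' : Fin m →₀ ℕ} (h : a' ≤ a) (ha : monomial a (1 : K) ∉ I) :
    monomial a' (1 : K) ∉ I := fun ha' => ha <| by
  rw [← add_tsub_cancel_of_le h, ← one_mul (1 : K), ← monomial_mul]
  exact I.mul_mem_right _ ha'

lemma lt_of_monomial_notMem {b : Fin m → ℕ}
    (hb : ∀ i, monomial (Finsupp.single i (b i)) (1 : K) ∈ I) {a : Fin m →₀ ℕ}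
    (ha : monomial a (1 : K) ∉ I) (i : Fin m) : a i < b i := by
  by_contra! h
  exact monomial_notMem_of_le (Finsupp.single_le_iff.mpr h) ha (hb i)

end

theorem statement5_general {K : Type} [Field K] {n : ℕ} (b : Fin n → ℕ)
    (I : Ideal (MvPolynomial (Fin n) K)) (hI : ZeroDimData K b I)
    (r : (Fin n →₀ ℕ) → (Fin n →₀ ℕ) → Prop)
    (hantisymm : ∀ a a', (monomial a (1 : K)) ∉ I → (monomial a' (1 : K)) ∉ I →
      r a a' → r a' a → a = a')
    (hext : ∀ a a', (monomial a (1 : K)) ∉ I → (monomial a' (1 : K)) ∉ I →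
      (∀ i, a i ≤ a' i) → r a a') :
    ∀ a : Fin n →₀ ℕ, (monomial a (1 : K)) ∉ I →
      ∃ T : Set (PolVars n b),
        (Ideal.span (genL K b ''
            {a' | (monomial a' (1 : K)) ∉ I ∧ r a' a ∧ a' ≠ a})).colon
          (Ideal.span {genL K b a})
        = Ideal.span ((fun v => (X v : MvPolynomial (PolVars n b) K)) '' T) := by
  intro a ha
  set E := {a' | (monomial a' (1 : K)) ∉ I ∧ r a' a ∧ a' ≠ a}
  have hbound : ∀ {a'}, monomial a' (1 : K) ∉ I → ∀ i, a' i < b i :=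
    lt_of_monomial_notMem fun i => (hI.2.2 i).2.1
  have hexists : ∀ a' ∈ E, ∃ i, a' i < a i := by
    rintro a' ⟨ha', hr, hne⟩
    by_contra! h
    exact hne (hantisymm a' a ha' ha hr (hext a a' ha ha' h))
  have hupdate : ∀ i j, j < a i → a.update i j ∈ E := by
    intro i j hj
    have hle : a.update i j ≤ a := fun k => by
      rcases eq_or_ne k i with rfl | hk
      · simp [hj.le]
      · simp [hk]
    have ha' := monomial_notMem_of_le hle ha
    exact ⟨ha', hext _ _ ha' ha hle, by simpa [Finsupp.ext_iff] using ⟨i, by simpa using hj.ne⟩⟩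
  have hspan : genL K b '' E = (fun s => monomial s 1) '' (genLExp b '' E) := by
    rw [Set.image_image]
    exact Set.image_congr fun _ _ => genL_eq_monomial _
  rw [hspan, genL_eq_monomial]
  refine ⟨_, colon_span_monomial_eq_span_X ?_⟩
  rintro _ ⟨a', ha', rfl⟩
  obtain ⟨i, hi⟩ := hexists a' ha'
  refine ⟨⟨i, ⟨a' i, hbound ha'.1 i⟩⟩, by simp [genLExp_apply, hi.ne], ?_⟩
  rw [← genL_eq_monomial, ← hspan]
  exact X_mul_genL_mem_span_genL _ (hbound ha i) (hupdate i _ hi)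

/-- The ideal `L(I)` has linear quotients with respect to any total order
on `G(L(I))` (equivalently, on its indexing set `Mon(S∖I)`) extending the componentwise
partial order: for every `u ∈ G(L(I))`, the colon ideal
`({v ∈ G(L(I)) : v < u}) : (u)` is generated by a subset of the variables of `S^℘`. -/
theorem statement5 {K : Type} [Field K] {n : ℕ} (b : Fin n → ℕ)
    (I : Ideal (MvPolynomial (Fin n) K)) (hI : ZeroDimData K b I)
    (r : (Fin n →₀ ℕ) → (Fin n →₀ ℕ) → Prop)
    (hrefl : ∀ a, (monomial a (1 : K)) ∉ I → r a a)
    (hantisymm : ∀ a a', (monomial a (1 : K)) ∉ I → (monomial a' (1 : K)) ∉ I →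
      r a a' → r a' a → a = a')
    (htrans : ∀ a a' a'', (monomial a (1 : K)) ∉ I → (monomial a' (1 : K)) ∉ I →
      (monomial a'' (1 : K)) ∉ I → r a a' → r a' a'' → r a a'')
    (htotal : ∀ a a', (monomial a (1 : K)) ∉ I → (monomial a' (1 : K)) ∉ I →
      r a a' ∨ r a' a)
    (hext : ∀ a a', (monomial a (1 : K)) ∉ I → (monomial a' (1 : K)) ∉ I →
      (∀ i, a i ≤ a' i) → r a a') :
    ∀ a : Fin n →₀ ℕ, (monomial a (1 : K)) ∉ I →
      ∃ T : Set (PolVars n b),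
        (Ideal.span (genL K b ''
            {a' | (monomial a' (1 : K)) ∉ I ∧ r a' a ∧ a' ≠ a})).colon
          (Ideal.span {genL K b a})
        = Ideal.span ((fun v => (X v : MvPolynomial (PolVars n b) K)) '' T) :=
  statement5_general b I hI r hantisymm hext

end
end

section
/- The simplicial complex Δ(I) is pure and shellable: its facets can be ordered F_1, F_2, …, F_m in such a way that for every 2 ≤ j ≤ m, the intersection of the simplex ⟨F_j⟩ with the subcomplex ⟨F_1, …, F_{j−1}⟩ generated by the previous facets is nonempty and pure of dimension |F_j| − 2 (i.e., it is generated by a nonempty collection of maximal proper faces of F_j). -/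
open MvPolynomial

noncomputable section

/-!
The facets of `Δ(I)` are the complements `F_s = 𝒮 ∖ {x_{1,s_1+1}, …, x_{n,s_n+1}}` of the graphs
of the exponent vectors `s` of the monomials `x^s ∉ I`; in particular they all have `|𝒮| - n`
elements. Order them by the degree of `s`. If `F_t` precedes `F_s`, then `t_i < s_i` for some
`i`, and lowering `s_i` to `t_i` gives `t' < s` with `x^{t'} ∉ I` of smaller degree, so `F_{t'}`
precedes `F_s`; and `F_s ∩ F_{t'} = F_s ∖ {x_{i,t_i+1}}` is a maximal proper face of `F_s`
containing `F_s ∩ F_t`.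
-/

open Finset

lemma Finset.exists_equiv_fin_monotone {α β : Type*} [LinearOrder β] (A : Finset α)
    (f : α → β) : ∃ e : Fin A.card ≃ A, Monotone fun j => f (e j) :=
  ⟨(Tuple.sort fun j => f (A.equivFin.symm j)).trans A.equivFin.symm,
    Tuple.monotone_sort fun j => f (A.equivFin.symm j)⟩

section SquarefreeMonomials

variable {σ R : Type*} [CommSemiring R]

lemma prod_X_eq_monomial_sum_single (F : Finset σ) :
    ∏ v ∈ F, (X v : MvPolynomial σ R) = monomial (∑ v ∈ F, Finsupp.single v 1) 1 := by
  rw [monomial_sum_one]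
  rfl

lemma sum_single_one_le_sum_single_one_iff [DecidableEq σ] {F G : Finset σ} :
    ∑ v ∈ F, Finsupp.single v 1 ≤ ∑ v ∈ G, Finsupp.single v 1 ↔ F ⊆ G := by
  rw [← Finsupp.orderIsoMultiset.le_iff_le, Finsupp.coe_orderIsoMultiset,
    Finsupp.toMultiset_sum_single, Finsupp.toMultiset_sum_single, one_nsmul, one_nsmul,
    Finset.val_le_iff]

lemma prod_X_mem_span_prod_X_image_iff [Nontrivial R] {𝒢 : Set (Finset σ)} {F : Finset σ} :
    ∏ v ∈ F, (X v : MvPolynomial σ R) ∈ Ideal.span ((fun G => ∏ v ∈ G, X v) '' 𝒢) ↔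
      ∃ G ∈ 𝒢, G ⊆ F := by
  classical
  simp_rw [prod_X_eq_monomial_sum_single]
  rw [← Set.image_image (fun d => monomial d (1 : R)), mem_ideal_span_monomial_image,
    support_monomial, if_neg one_ne_zero]
  simp [sum_single_one_le_sum_single_one_iff]

end SquarefreeMonomials

section GraphComplements

variable {ι : Type*} [Fintype ι] {b : ι → ℕ}

def tupleDegree (s : ∀ i, Fin (b i)) : ℕ := ∑ i, (s i : ℕ)

def graphCompl (s : ∀ i, Fin (b i)) : Finset (Σ i, Fin (b i)) :=
  univ.filter fun v => v.2 ≠ s v.1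

@[simp]
lemma mem_graphCompl {s : ∀ i, Fin (b i)} {v : Σ i, Fin (b i)} :
    v ∈ graphCompl s ↔ v.2 ≠ s v.1 := by
  simp [graphCompl]

lemma graphCompl_subset_graphCompl_iff {s t : ∀ i, Fin (b i)} :
    graphCompl s ⊆ graphCompl t ↔ s = t := by
  refine ⟨fun h => funext fun i => ?_, fun h => h ▸ subset_rfl⟩
  by_contra hne
  simpa using @h ⟨i, t i⟩ (mem_graphCompl.2 (Ne.symm hne))

lemma graphCompl_injective : Function.Injective (graphCompl (b := b)) :=
  fun _ _ h => graphCompl_subset_graphCompl_iff.1 h.subset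

lemma tupleDegree_strictMono : StrictMono (tupleDegree (b := b)) := by
  intro s t hst
  obtain ⟨hle, i, hi⟩ := Pi.lt_def.1 hst
  exact sum_lt_sum (fun j _ => hle j) ⟨i, mem_univ i, hi⟩

variable [DecidableEq ι]

lemma card_graphCompl (s : ∀ i, Fin (b i)) :
    (graphCompl s).card = Fintype.card (Σ i, Fin (b i)) - Fintype.card ι := by
  have hgraph : (graphCompl s)ᶜ =
      univ.map ⟨fun i => ⟨i, s i⟩, fun _ _ h => congrArg Sigma.fst h⟩ := by
    ext ⟨i, j⟩
    simp only [mem_compl, mem_graphCompl, not_not, mem_map, mem_univ, true_and]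
    constructor
    · rintro rfl
      exact ⟨i, rfl⟩
    · rintro ⟨_, ⟨⟩⟩
      rfl
  have := card_compl (graphCompl s)
  rw [hgraph, card_map, card_univ] at this
  have := card_le_univ (graphCompl s)
  omega

lemma exists_lt_erase_subset_graphCompl {s t : ∀ i, Fin (b i)} (hts : t ≠ s)
    (hdeg : tupleDegree t ≤ tupleDegree s) :
    ∃ v ∈ graphCompl s, ∃ t' < s,
      graphCompl s ∩ graphCompl t ⊆ (graphCompl s).erase v ∧
      (graphCompl s).erase v ⊆ graphCompl t' := by
  obtain ⟨i₀, hi₀⟩ : ∃ i, t i < s i := by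
    by_contra! hst
    exact hdeg.not_gt (tupleDegree_strictMono (lt_of_le_of_ne hst hts.symm))
  refine ⟨⟨i₀, t i₀⟩, mem_graphCompl.2 hi₀.ne, Function.update s i₀ (t i₀),
    update_lt_self_iff.2 hi₀, ?_, ?_⟩
  · intro w hw
    rw [mem_inter] at hw
    refine mem_erase.2 ⟨?_, hw.1⟩
    rintro rfl
    exact mem_graphCompl.1 hw.2 rfl
  · rintro ⟨i, j⟩ hw
    rw [mem_erase, mem_graphCompl] at hw
    rw [mem_graphCompl]
    by_cases hi : i = i₀
    · subst hi
      rw [Function.update_self]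
      rintro rfl
      exact hw.1 rfl
    · rw [Function.update_of_ne hi]
      exact hw.2

lemma exists_erase_subset_earlier_of_monotone {m : ℕ} {e : Fin m → ∀ i, Fin (b i)}
    (he : Function.Injective e) (hmono : Monotone fun j => tupleDegree (e j))
    (hclosed : ∀ j, ∀ t ≤ e j, ∃ i, e i = t) {i j : Fin m} (hij : i < j)
    {G : Finset (Σ i, Fin (b i))} (hGj : G ⊆ graphCompl (e j)) (hGi : G ⊆ graphCompl (e i)) :
    ∃ H, G ⊆ H ∧ H ⊆ graphCompl (e j) ∧ H.card + 1 = (graphCompl (e j)).card ∧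
      ∃ i' < j, H ⊆ graphCompl (e i') := by
  obtain ⟨v, hv, t', hlt, hinter, hsub⟩ :=
    exists_lt_erase_subset_graphCompl (he.ne hij.ne) (hmono hij.le)
  obtain ⟨i', rfl⟩ := hclosed j t' hlt.le
  exact ⟨_, fun w hw => hinter (mem_inter.2 ⟨hGj hw, hGi hw⟩), erase_subset _ _,
    card_erase_add_one hv, i', hmono.reflect_lt (tupleDegree_strictMono hlt), hsub⟩

end GraphComplements

lemma monomial_mem_of_le {σ R : Type*} [CommSemiring R] {I : Ideal (MvPolynomial σ R)}
    {a c : σ →₀ ℕ} (hac : a ≤ c) (ha : monomial a (1 : R) ∈ I) : monomial c (1 : R) ∈ I := by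
  rw [← tsub_add_cancel_of_le hac, ← mul_one (1 : R), ← monomial_mul]
  exact I.mul_mem_left _ ha

section Polarization

variable {K : Type} [Field K] {n : ℕ} {b : Fin n → ℕ} {I : Ideal (MvPolynomial (Fin n) K)}

def tupleExponent (s : ∀ i, Fin (b i)) : Fin n →₀ ℕ :=
  Finsupp.equivFunOnFinite.symm fun i => s i

@[simp]
lemma tupleExponent_apply (s : ∀ i, Fin (b i)) (i : Fin n) : tupleExponent s i = s i := rfl

lemma monomial_tupleExponent_notMem_of_le {s t : ∀ i, Fin (b i)} (hts : t ≤ s)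
    (hs : monomial (tupleExponent s) (1 : K) ∉ I) : monomial (tupleExponent t) (1 : K) ∉ I :=
  fun ht => hs (monomial_mem_of_le (fun i => by simpa using hts i) ht)

lemma exists_mem_minGens_le {c : Fin n →₀ ℕ} (hc : monomial c (1 : K) ∈ I) :
    ∃ a ∈ MinGens K I, a ≤ c := by
  obtain ⟨a, ⟨hac, haI⟩, hmin⟩ :=
    wellFounded_lt.has_min {a | a ≤ c ∧ monomial a (1 : K) ∈ I} ⟨c, le_rfl, hc⟩
  exact ⟨a, ⟨haI, fun a' ha'a hne ha'I =>
    hmin a' ⟨ha'a.trans hac, ha'I⟩ (lt_of_le_of_ne ha'a hne)⟩, hac⟩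

/-- The support of the polarization `polMon K b c` of `x^c`. -/
def polSupport (b : Fin n → ℕ) (c : Fin n →₀ ℕ) : Finset (PolVars n b) :=
  univ.filter fun v => (v.2 : ℕ) < c v.1

@[simp]
lemma mem_polSupport {c : Fin n →₀ ℕ} {v : PolVars n b} :
    v ∈ polSupport b c ↔ (v.2 : ℕ) < c v.1 := by
  simp [polSupport]

lemma mem_facesDelta_iff {F : Finset (PolVars n b)} :
    F ∈ facesDelta K b I ↔ ∀ c ∈ MinGens K I, ¬ polSupport b c ⊆ F := by
  have hgens : polMon K b '' MinGens K I =
      (fun G => ∏ v ∈ G, X v) '' (polSupport b '' MinGens K I) :=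
    (Set.image_image (fun G => ∏ v ∈ G, X v) (polSupport b) (MinGens K I)).symm
  rw [facesDelta, Set.mem_ofPred_eq, polarIdeal, hgens, prod_X_mem_span_prod_X_image_iff]
  simp

lemma graphCompl_mem_facesDelta {s : ∀ i, Fin (b i)}
    (hs : monomial (tupleExponent s) (1 : K) ∉ I) : graphCompl s ∈ facesDelta K b I := by
  refine mem_facesDelta_iff.2 fun c hc hsub => hs (monomial_mem_of_le (fun i => ?_) hc.1)
  by_contra! hlt
  exact mem_graphCompl.1 (hsub (x := ⟨i, s i⟩) (mem_polSupport.2 hlt)) rfl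

lemma exists_row_notMem_of_mem_facesDelta
    (hb : ∀ i, monomial (Finsupp.single i (b i)) (1 : K) ∈ I)
    {F : Finset (PolVars n b)} (hF : F ∈ facesDelta K b I) (i : Fin n) :
    ∃ j : Fin (b i), (⟨i, j⟩ : PolVars n b) ∉ F := by
  obtain ⟨c, hc, hci⟩ := exists_mem_minGens_le (hb i)
  by_contra! hrow
  refine mem_facesDelta_iff.1 hF c hc fun ⟨i', j⟩ hv => ?_
  obtain rfl : i' = i := by
    by_contra hne
    have := hci i'
    simp [Finsupp.single_eq_of_ne hne] at this
    simp [this] at hv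
  exact hrow j

-- The witness `s i` is the first gap of the face `F` in row `i`.
lemma exists_subset_graphCompl (hb : ∀ i, monomial (Finsupp.single i (b i)) (1 : K) ∈ I)
    {F : Finset (PolVars n b)} (hF : F ∈ facesDelta K b I) :
    ∃ s : ∀ i, Fin (b i), monomial (tupleExponent s) (1 : K) ∉ I ∧ F ⊆ graphCompl s := by
  choose s hsF hmin using fun i => wellFounded_lt.has_min
    {j : Fin (b i) | (⟨i, j⟩ : PolVars n b) ∉ F}
    (exists_row_notMem_of_mem_facesDelta hb hF i)
  refine ⟨s, fun hs => ?_, fun ⟨i, j⟩ hv => mem_graphCompl.2 ?_⟩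
  · obtain ⟨c, hc, hcs⟩ := exists_mem_minGens_le hs
    refine mem_facesDelta_iff.1 hF c hc fun ⟨i, j⟩ hv => ?_
    by_contra hj
    exact hmin i j hj (show (j : ℕ) < s i from (mem_polSupport.1 hv).trans_le (hcs i))
  · intro hj
    dsimp only at hj
    subst hj
    exact hsF i hv

lemma isFacetOf_facesDelta_iff (hb : ∀ i, monomial (Finsupp.single i (b i)) (1 : K) ∈ I)
    {G : Finset (PolVars n b)} :
    IsFacetOf (facesDelta K b I) G ↔
      ∃ s : ∀ i, Fin (b i), monomial (tupleExponent s) (1 : K) ∉ I ∧ graphCompl s = G := by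
  constructor
  · rintro ⟨hG, hmax⟩
    obtain ⟨s, hs, hsub⟩ := exists_subset_graphCompl hb hG
    exact ⟨s, hs, (hmax _ (graphCompl_mem_facesDelta hs) hsub).symm⟩
  · rintro ⟨s, hs, rfl⟩
    refine ⟨graphCompl_mem_facesDelta hs, fun G hG hsub => ?_⟩
    obtain ⟨t, -, hGt⟩ := exists_subset_graphCompl hb hG
    obtain rfl := graphCompl_subset_graphCompl_iff.1 (hsub.trans hGt)
    exact hsub.antisymm hGt

end Polarization

/-- `Δ(I)` is pure and shellable: its facets can be ordered
`F_1, …, F_m` so that for every `j ≥ 2` the intersection of the simplex `⟨F_j⟩` with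
`⟨F_1, …, F_{j−1}⟩` is nonempty and pure of dimension `|F_j| − 2`, i.e. it is generated by
a nonempty collection of maximal proper faces of `F_j`: there is at least one `H ⊆ F_j`
with `|H| = |F_j| − 1` contained in an earlier facet, and every common face of `F_j` and
an earlier facet is contained in such an `H`. -/
theorem statement8 {K : Type} [Field K] {n : ℕ} (b : Fin n → ℕ)
    (I : Ideal (MvPolynomial (Fin n) K)) (hI : ZeroDimData K b I) :
    ∃ (m : ℕ) (F : Fin m → Finset (PolVars n b)),
      (∀ j, IsFacetOf (facesDelta K b I) (F j)) ∧
      Function.Injective F ∧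
      (∀ G : Finset (PolVars n b), IsFacetOf (facesDelta K b I) G → ∃ j, F j = G) ∧
      (∀ j j' : Fin m, (F j).card = (F j').card) ∧
      (∀ j : Fin m, 0 < (j : ℕ) →
        (∃ H : Finset (PolVars n b), H ⊆ F j ∧ H.card + 1 = (F j).card ∧
          ∃ i : Fin m, i < j ∧ H ⊆ F i) ∧
        (∀ G : Finset (PolVars n b), G ⊆ F j → (∃ i : Fin m, i < j ∧ G ⊆ F i) →
          ∃ H : Finset (PolVars n b), G ⊆ H ∧ H ⊆ F j ∧ H.card + 1 = (F j).card ∧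
            ∃ i : Fin m, i < j ∧ H ⊆ F i)) := by
  classical
  have hb : ∀ i, monomial (Finsupp.single i (b i)) (1 : K) ∈ I := fun i => (hI.2.2 i).2.1
  let A := univ.filter fun s : ∀ i, Fin (b i) => monomial (tupleExponent s) (1 : K) ∉ I
  obtain ⟨e, hmono⟩ := A.exists_equiv_fin_monotone tupleDegree
  have hA : ∀ j, monomial (tupleExponent (e j : ∀ i, Fin (b i))) (1 : K) ∉ I :=
    fun j => (mem_filter.1 (e j).2).2
  have hinj : Function.Injective fun j => (e j : ∀ i, Fin (b i)) :=
    Subtype.val_injective.comp e.injective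
  have hclosed : ∀ j, ∀ t ≤ (e j : ∀ i, Fin (b i)), ∃ i, (e i : ∀ i, Fin (b i)) = t :=
    fun j t ht => ⟨e.symm ⟨t, mem_filter.2 ⟨mem_univ t,
      monomial_tupleExponent_notMem_of_le ht (hA j)⟩⟩, by simp⟩
  refine ⟨A.card, fun j => graphCompl (e j : ∀ i, Fin (b i)),
    fun j => (isFacetOf_facesDelta_iff hb).2 ⟨_, hA j, rfl⟩, graphCompl_injective.comp hinj,
    fun G hG => ?_, fun j j' => by simp only [card_graphCompl], fun j hj => ⟨?_, ?_⟩⟩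
  · obtain ⟨s, hs, rfl⟩ := (isFacetOf_facesDelta_iff hb).1 hG
    exact ⟨e.symm ⟨s, mem_filter.2 ⟨mem_univ s, hs⟩⟩, by simp⟩
  · obtain ⟨H, -, hH⟩ := exists_erase_subset_earlier_of_monotone hinj hmono hclosed
      (i := ⟨0, by omega⟩) hj (empty_subset _) (empty_subset _)
    exact ⟨H, hH⟩
  · rintro G hGj ⟨i, hij, hGi⟩
    exact exists_erase_subset_earlier_of_monotone hinj hmono hclosed hij hGj hGi
end
end
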